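/- arXiv:1504.00826 — 8 statements merged into one kernel-verified Lean document; each statement's English description precedes it below -/
import Mathlib

section
/- Fix n ≥ 1, rates λ_1, ..., λ_n > 0 and λ_obs > 0, and μ ∈ [0,1], and define for each K ⊆ {1,...,n}: P_ME(∅) = λ_obs / (λ_obs + Σ_i λ_i); for |K| = 1 with K = {k}, P_ME(K) = [λ_k / (λ_obs + Σ_i λ_i)] · [λ_obs + μ(Σ_i λ_i − λ_k)] / (λ_obs + Σ_i λ_i − λ_k); and for |K| ≥ 2, P_ME(K) = (1−μ) · Σ_{(i_1,...,i_{|K|}) ∈ S_K} [λ_obs / (λ_obs + Σ_{i ∉ K} λ_i)] · Π_{j=1}^{|K|} [λ_{i_j} / (Σ_{l=j}^{|K|} λ_{i_l} + λ_obs + Σ_{i ∉ K} λ_i)], where S_K is the set of all permutations of K. Then Σ_{K ⊆ {1,...,n}} P_ME(K) = 1. -/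
open MeasureTheory ProbabilityTheory Finset

/-!
Write `P_ME = (1 - μ) P_Null + μ P_Excl`, where the fully exclusive model `P_Excl` puts mass
`λ_obs / T` on `∅` and `λ_k / T` on `{k}`, with `T = λ_obs + ∑ λ_i`; both sum to one.

For the null model, replace `{1, …, n}` by an arbitrary gene set `A`. Splitting each ordering
of `K ⊆ A` at its first gene `k` factors its weight as `λ_k / (λ_obs + λ(A))` times the weight
of the remaining ordering of `K \ {k}` within `A \ {k}`. By induction on `A` the inner sums are
one, so the total mass is `(λ_obs + ∑_{k ∈ A} λ_k) / (λ_obs + λ(A)) = 1`.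
-/

/-- For a list of indices `(i_1, …, i_m)` (an ordering of the altered genes) and a constant
`C = λ_obs + ∑_{i ∉ K} λ_i`, the product `∏_{j=1}^m λ_{i_j} / (∑_{l=j}^m λ_{i_l} + C)`. -/
noncomputable def ordProd {n : ℕ} (lam : Fin n → ℝ) (C : ℝ) : List (Fin n) → ℝ
  | [] => 1
  | i :: rest => lam i / (((i :: rest).map lam).sum + C) * ordProd lam C rest

/-- The TiMEx null-model probability of the genotype `g_K`:
`P(g_K | θ_Null) = ∑_{(i_1,…,i_|K|) ∈ S_K} [λ_obs / (λ_obs + ∑_{i ∉ K} λ_i)] ·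
∏_{j=1}^{|K|} λ_{i_j} / (∑_{l=j}^{|K|} λ_{i_l} + λ_obs + ∑_{i ∉ K} λ_i)`,
where `S_K` is the set of all permutations of `K` (for `K = ∅` this equals
`λ_obs / (λ_obs + ∑_i λ_i)`). -/
noncomputable def nullProb {n : ℕ} (lam : Fin n → ℝ) (lobs : ℝ) (K : Finset (Fin n)) : ℝ :=
  (((K.sort (· ≤ ·)).permutations).map
    (fun l => (lobs / (lobs + ∑ i ∈ Kᶜ, lam i)) *
      ordProd lam (lobs + ∑ i ∈ Kᶜ, lam i) l)).sum
/-- The TiMEx mutual-exclusivity-model probability of the genotype `g_K`, for degree of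
mutual exclusivity `μ`: `P(∅) = λ_obs / (λ_obs + ∑_i λ_i)`; for `K = {k}`,
`P(K) = [λ_k / (λ_obs + ∑_i λ_i)] · [λ_obs + μ(∑_i λ_i − λ_k)] / (λ_obs + ∑_i λ_i − λ_k)`;
and for `|K| ≥ 2`, `P(K) = (1 − μ) · P(g_K | θ_Null)`. -/
noncomputable def meProb {n : ℕ} (lam : Fin n → ℝ) (lobs mu : ℝ) (K : Finset (Fin n)) : ℝ :=
  if K.card = 0 then lobs / (lobs + ∑ i, lam i)
  else if K.card = 1 then
    ∑ k ∈ K, (lam k / (lobs + ∑ i, lam i)) *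
      ((lobs + mu * ((∑ i, lam i) - lam k)) / (lobs + (∑ i, lam i) - lam k))
  else (1 - mu) * nullProb lam lobs K

section Permutations

variable {α M : Type*} [LinearOrder α] [AddCommMonoid M]

theorem mem_permutations_sort_iff (K : Finset α) (l : List α) :
    l ∈ (K.sort (· ≤ ·)).permutations ↔ (l : Multiset α) = K.val := by
  rw [List.mem_permutations, ← Multiset.coe_eq_coe, Finset.sort_eq]

theorem cons_mem_permutations_sort_iff (K : Finset α) (k : α) (l : List α) :
    k :: l ∈ (K.sort (· ≤ ·)).permutations ↔
      k ∈ K ∧ l ∈ ((K.erase k).sort (· ≤ ·)).permutations := by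
  simp only [mem_permutations_sort_iff, ← Multiset.cons_coe, Finset.erase_val]
  constructor
  · intro h
    refine ⟨?_, by rw [← h, Multiset.erase_cons_head]⟩
    rw [← Finset.mem_val, ← h]
    exact Multiset.mem_cons_self _ _
  · rintro ⟨hk, h⟩
    rw [h, Multiset.cons_erase (Finset.mem_val.mpr hk)]

theorem sum_map_eq_sum_of_mem_permutations_sort {K : Finset α} {l : List α}
    (hl : l ∈ (K.sort (· ≤ ·)).permutations) (f : α → M) :
    (l.map f).sum = ∑ i ∈ K, f i := by
  rw [mem_permutations_sort_iff] at hl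
  rw [← Multiset.sum_coe, ← Multiset.map_coe, hl]
  rfl

theorem toFinset_permutations_sort {K : Finset α} (hK : K.Nonempty) :
    (K.sort (· ≤ ·)).permutations.toFinset =
      K.biUnion fun k => ((K.erase k).sort (· ≤ ·)).permutations.toFinset.image (k :: ·) := by
  ext l
  cases l with
  | nil =>
    simp only [List.mem_toFinset, mem_permutations_sort_iff, Finset.mem_biUnion,
      Finset.mem_image, reduceCtorEq, and_false, exists_false, iff_false]
    exact fun h => hK.ne_empty (Finset.val_eq_zero.mp h.symm)
  | cons k l =>
    simp only [List.mem_toFinset, cons_mem_permutations_sort_iff, Finset.mem_biUnion,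
      Finset.mem_image, List.cons.injEq]
    constructor
    · rintro ⟨hk, hl⟩
      exact ⟨k, hk, l, hl, rfl, rfl⟩
    · rintro ⟨_, hk, _, hl, rfl, rfl⟩
      exact ⟨hk, hl⟩

theorem sum_permutations_sort_eq_sum_erase {K : Finset α} (hK : K.Nonempty) (f : List α → M) :
    ((K.sort (· ≤ ·)).permutations.map f).sum =
      ∑ k ∈ K, (((K.erase k).sort (· ≤ ·)).permutations.map fun l => f (k :: l)).sum := by
  have nodup (s : Finset α) : (s.sort (· ≤ ·)).permutations.Nodup :=
    List.nodup_permutations _ (s.sort_nodup _)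
  rw [← List.sum_toFinset f (nodup K), toFinset_permutations_sort hK, Finset.sum_biUnion]
  · refine Finset.sum_congr rfl fun k _ => ?_
    rw [Finset.sum_image fun _ _ _ _ h => List.cons_injective h,
      List.sum_toFinset _ (nodup _)]
  · intro a _ b _ hab
    simp only [Function.onFun, Finset.disjoint_left, Finset.mem_image]
    rintro _ ⟨x, _, rfl⟩ ⟨y, _, h⟩
    exact hab (List.cons_eq_cons.mp h).1.symm

end Permutations

theorem Finset.sum_powerset_sum_eq_sum_sum_powerset_erase {α M : Type*} [DecidableEq α]
    [AddCommMonoid M] (A : Finset α) (g : α → Finset α → M) :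
    ∑ K ∈ A.powerset, ∑ k ∈ K, g k K =
      ∑ k ∈ A, ∑ K ∈ (A.erase k).powerset, g k (insert k K) := by
  calc ∑ K ∈ A.powerset, ∑ k ∈ K, g k K
      = ∑ K ∈ A.powerset, ∑ k ∈ A, if k ∈ K then g k K else 0 := by
        refine sum_congr rfl fun K hK => ?_
        rw [sum_ite_mem, inter_eq_right.mpr (mem_powerset.mp hK)]
    _ = ∑ k ∈ A, ∑ K ∈ A.powerset, if k ∈ K then g k K else 0 := sum_comm
    _ = _ := by
        refine sum_congr rfl fun k hk => ?_
        conv_lhs => rw [← insert_erase hk]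
        rw [sum_powerset_insert (A.notMem_erase k), sum_eq_zero, zero_add]
        · simp
        · intro K hK
          rw [if_neg fun h => A.notMem_erase k (mem_powerset.mp hK h)]

section NullModel

variable {n : ℕ}

noncomputable def nullWeight (lam : Fin n → ℝ) (lobs : ℝ) (A K : Finset (Fin n))
    (l : List (Fin n)) : ℝ :=
  lobs / (lobs + ∑ i ∈ A \ K, lam i) * ordProd lam (lobs + ∑ i ∈ A \ K, lam i) l

/-- The null model on the gene set `A`; `nullProb` is the case `A = univ`. -/
noncomputable def nullProbOn (lam : Fin n → ℝ) (lobs : ℝ) (A K : Finset (Fin n)) : ℝ :=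
  ((K.sort (· ≤ ·)).permutations.map (nullWeight lam lobs A K)).sum

theorem nullProb_eq_nullProbOn_univ (lam : Fin n → ℝ) (lobs : ℝ) (K : Finset (Fin n)) :
    nullProb lam lobs K = nullProbOn lam lobs univ K := by
  rw [nullProb, nullProbOn, compl_eq_univ_sdiff]
  rfl

theorem nullProbOn_empty (lam : Fin n → ℝ) (lobs : ℝ) (A : Finset (Fin n)) :
    nullProbOn lam lobs A ∅ = lobs / (lobs + ∑ i ∈ A, lam i) := by
  simp [nullProbOn, nullWeight, ordProd]

theorem nullWeight_cons (lam : Fin n → ℝ) (lobs : ℝ) {A K : Finset (Fin n)} (hKA : K ⊆ A)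
    {k : Fin n} {l : List (Fin n)} (hl : k :: l ∈ (K.sort (· ≤ ·)).permutations) :
    nullWeight lam lobs A K (k :: l) =
      lam k / (lobs + ∑ i ∈ A, lam i) * nullWeight lam lobs (A.erase k) (K.erase k) l := by
  have hk : k ∈ K := ((cons_mem_permutations_sort_iff K k l).mp hl).1
  have hsdiff : A.erase k \ K.erase k = A \ K := by
    ext i
    simp only [mem_sdiff, mem_erase]
    constructor
    · rintro ⟨⟨hik, hiA⟩, hiK⟩
      exact ⟨hiA, fun hi => hiK ⟨hik, hi⟩⟩
    · rintro ⟨hiA, hiK⟩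
      exact ⟨⟨fun h => hiK (h ▸ hk), hiA⟩, fun h => hiK h.2⟩
  have hden :
      ((k :: l).map lam).sum + (lobs + ∑ i ∈ A \ K, lam i) = lobs + ∑ i ∈ A, lam i := by
    rw [sum_map_eq_sum_of_mem_permutations_sort hl, ← sum_sdiff hKA]
    ring
  simp only [nullWeight, hsdiff, ordProd, hden]
  ring

theorem nullProbOn_eq_sum_erase (lam : Fin n → ℝ) (lobs : ℝ) {A K : Finset (Fin n)}
    (hKA : K ⊆ A) (hK : K.Nonempty) :
    nullProbOn lam lobs A K =
      ∑ k ∈ K,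
        lam k / (lobs + ∑ i ∈ A, lam i) * nullProbOn lam lobs (A.erase k) (K.erase k) := by
  rw [nullProbOn, sum_permutations_sort_eq_sum_erase hK]
  refine sum_congr rfl fun k hk => ?_
  rw [nullProbOn, ← List.sum_map_mul_left]
  congr 1
  refine List.map_congr_left fun l hl => nullWeight_cons lam lobs hKA ?_
  exact (cons_mem_permutations_sort_iff K k l).mpr ⟨hk, hl⟩

theorem sum_powerset_nullProbOn (lam : Fin n → ℝ) (lobs : ℝ) (hlam : ∀ i, 0 ≤ lam i)
    (hlobs : 0 < lobs) (A : Finset (Fin n)) :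
    ∑ K ∈ A.powerset, nullProbOn lam lobs A K = 1 := by
  induction A using Finset.strongInduction with
  | H A ih =>
  set R := lobs + ∑ i ∈ A, lam i
  have hR : R ≠ 0 := (add_pos_of_pos_of_nonneg hlobs (sum_nonneg fun i _ => hlam i)).ne'
  have hsplit : ∀ K ∈ A.powerset, nullProbOn lam lobs A K = (if K = ∅ then lobs / R else 0) +
      ∑ k ∈ K, lam k / R * nullProbOn lam lobs (A.erase k) (K.erase k) := by
    intro K hK
    rcases K.eq_empty_or_nonempty with rfl | hne
    · simp [nullProbOn_empty, R]
    · rw [if_neg hne.ne_empty, zero_add,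
        nullProbOn_eq_sum_erase lam lobs (mem_powerset.mp hK) hne]
  have hstartingWith (k : Fin n) (hk : k ∈ A) :
      ∑ K ∈ (A.erase k).powerset,
        lam k / R * nullProbOn lam lobs (A.erase k) ((insert k K).erase k) = lam k / R := by
    conv_rhs => rw [← mul_one (lam k / R), ← ih _ (erase_ssubset hk)]
    rw [← mul_sum]
    congr 1
    refine sum_congr rfl fun K hK => ?_
    rw [erase_insert fun h => A.notMem_erase k (mem_powerset.mp hK h)]
  calc ∑ K ∈ A.powerset, nullProbOn lam lobs A K
      = lobs / R + ∑ k ∈ A, lam k / R := by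
        rw [sum_congr rfl hsplit, sum_add_distrib, sum_ite_eq', if_pos (empty_mem_powerset A),
          sum_powerset_sum_eq_sum_sum_powerset_erase]
        exact congrArg _ (sum_congr rfl hstartingWith)
    _ = 1 := by rw [← sum_div, ← add_div, div_self hR]

theorem sum_nullProb (lam : Fin n → ℝ) (lobs : ℝ) (hlam : ∀ i, 0 ≤ lam i)
    (hlobs : 0 < lobs) :
    ∑ K, nullProb lam lobs K = 1 := by
  simp only [nullProb_eq_nullProbOn_univ]
  rw [← powerset_univ]
  exact sum_powerset_nullProbOn lam lobs hlam hlobs univ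

theorem nullProb_empty (lam : Fin n → ℝ) (lobs : ℝ) :
    nullProb lam lobs ∅ = lobs / (lobs + ∑ i, lam i) := by
  rw [nullProb_eq_nullProbOn_univ, nullProbOn_empty]

theorem nullProb_singleton (lam : Fin n → ℝ) (lobs : ℝ) (k : Fin n) :
    nullProb lam lobs {k} =
      lam k / (lobs + ∑ i, lam i) * (lobs / (lobs + (∑ i, lam i - lam k))) := by
  rw [nullProb_eq_nullProbOn_univ, nullProbOn_eq_sum_erase lam lobs (subset_univ _)
    (singleton_nonempty k), sum_singleton, erase_singleton, nullProbOn_empty,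
    sum_erase_eq_sub (mem_univ k)]

end NullModel

section ExclusiveModel

variable {n : ℕ}

/-- The model `meProb` at `μ = 1`: the first alteration excludes all others. -/
noncomputable def exclusiveProb (lam : Fin n → ℝ) (lobs : ℝ) (K : Finset (Fin n)) : ℝ :=
  if K.card = 0 then lobs / (lobs + ∑ i, lam i)
  else if K.card = 1 then ∑ k ∈ K, lam k / (lobs + ∑ i, lam i)
  else 0

theorem sum_exclusiveProb (lam : Fin n → ℝ) (lobs : ℝ) (hT : lobs + ∑ i, lam i ≠ 0) :
    ∑ K, exclusiveProb lam lobs K = 1 := by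
  set atMostOne : Finset (Finset (Fin n)) :=
    insert ∅ (univ.map ⟨singleton, singleton_injective⟩)
  have hsupp : ∀ K ∉ atMostOne, exclusiveProb lam lobs K = 0 := by
    intro K hK
    simp only [atMostOne, mem_insert, mem_map, mem_univ, true_and, not_or, not_exists,
      Function.Embedding.coeFn_mk] at hK
    rw [exclusiveProb, if_neg (card_ne_zero.mpr (nonempty_iff_ne_empty.mpr hK.1)), if_neg]
    intro h
    obtain ⟨k, rfl⟩ := card_eq_one.mp h
    exact hK.2 k rfl
  rw [← sum_subset (subset_univ atMostOne) fun K _ => hsupp K, sum_insert, sum_map]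
  · simp only [exclusiveProb, card_empty, ↓reduceIte, Function.Embedding.coeFn_mk,
      card_singleton, one_ne_zero, sum_singleton]
    rw [← sum_div, ← add_div, div_self hT]
  · simp

theorem meProb_eq_add_exclusiveProb (lam : Fin n → ℝ) (lobs mu : ℝ)
    (hlam : ∀ i, 0 ≤ lam i) (hlobs : 0 < lobs) (K : Finset (Fin n)) :
    meProb lam lobs mu K = (1 - mu) * nullProb lam lobs K + mu * exclusiveProb lam lobs K := by
  rw [meProb, exclusiveProb]
  split_ifs with h0 h1
  · rw [card_eq_zero.mp h0, nullProb_empty]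
    ring
  · obtain ⟨k, rfl⟩ := card_eq_one.mp h1
    have hpos : 0 < lobs + (∑ i, lam i - lam k) := by
      rw [← sum_erase_eq_sub (mem_univ k)]
      exact add_pos_of_pos_of_nonneg hlobs (sum_nonneg fun i _ => hlam i)
    have hT : 0 < lobs + ∑ i, lam i :=
      add_pos_of_pos_of_nonneg hlobs (sum_nonneg fun i _ => hlam i)
    rw [nullProb_singleton, sum_singleton, sum_singleton, add_sub_assoc]
    field_simp
    ring
  · ring

end ExclusiveModel

theorem timex_me_model_sums_to_one_general
    (n : ℕ) (lam : Fin n → ℝ) (lobs : ℝ)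
    (hlam : ∀ i, 0 < lam i) (hlobs : 0 < lobs)
    (mu : ℝ) :
    ∑ K : Finset (Fin n), meProb lam lobs mu K = 1 := by
  have hlam' : ∀ i, 0 ≤ lam i := fun i => (hlam i).le
  have hT : lobs + ∑ i, lam i ≠ 0 :=
    (add_pos_of_pos_of_nonneg hlobs (sum_nonneg fun i _ => hlam' i)).ne'
  simp only [meProb_eq_add_exclusiveProb lam lobs mu hlam' hlobs]
  rw [sum_add_distrib, ← mul_sum, ← mul_sum, sum_nullProb lam lobs hlam' hlobs,
    sum_exclusiveProb lam lobs hT]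
  ring

/-- the TiMEx mutual-exclusivity-model genotype probabilities form a
probability distribution on the subsets `K ⊆ {1,…,n}`. -/
theorem timex_me_model_sums_to_one
    (n : ℕ) (hn : 1 ≤ n) (lam : Fin n → ℝ) (lobs : ℝ)
    (hlam : ∀ i, 0 < lam i) (hlobs : 0 < lobs)
    (mu : ℝ) (hmu : mu ∈ Set.Icc (0 : ℝ) 1) :
    ∑ K : Finset (Fin n), meProb lam lobs mu K = 1 :=
  timex_me_model_sums_to_one_general n lam lobs hlam hlobs mu
end

section
/- Fix n ≥ 1 and rates λ_1, ..., λ_n > 0 and λ_obs > 0, and define for each K ⊆ {1,...,n}: P_Null(∅) = λ_obs / (λ_obs + Σ_i λ_i) and, for nonempty K, P_Null(K) = Σ_{(i_1,...,i_{|K|}) ∈ S_K} [λ_obs / (λ_obs + Σ_{i ∉ K} λ_i)] · Π_{j=1}^{|K|} [λ_{i_j} / (Σ_{l=j}^{|K|} λ_{i_l} + λ_obs + Σ_{i ∉ K} λ_i)], where S_K is the set of all permutations of K. Then Σ_{K ⊆ {1,...,n}} P_Null(K) = 1. -/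
open MeasureTheory ProbabilityTheory Finset

/-!
Condition on which exponential clock rings first. Let `P_U(K)` be the permutation-sum formula
for the genes `K ⊆ U` being altered when only the genes of `U` compete with the observation, and
`T_U = λ_obs + ∑_{i ∈ U} λ_i`. Peeling the first gene off each ordering gives `P_U(∅) = λ_obs / T_U`
and `P_U(K) = ∑_{i ∈ K} (λ_i / T_U) P_{U \ {i}}(K \ {i})`, so summing over `K ⊆ U` and inducting
on `U` yields `λ_obs / T_U + ∑_{i ∈ U} λ_i / T_U = 1`.
-/

theorem List.Nodup.permutations_perm_flatten {α : Type*} [DecidableEq α] {l : List α}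
    (hl : l.Nodup) (hne : l ≠ []) :
    l.permutations.Perm (l.map fun i => (l.erase i).permutations.map (i :: ·)).flatten := by
  refine (List.perm_ext_iff_of_nodup (List.nodup_permutations l hl) ?_).2 fun p => ?_
  · refine List.nodup_flatten.2 ⟨?_, ?_⟩
    · simp only [List.mem_map]
      rintro _ ⟨i, -, rfl⟩
      exact (List.nodup_permutations _ (hl.erase i)).map List.cons_injective
    · refine List.pairwise_map.2 (hl.imp fun hij => ?_)
      simp only [List.disjoint_left, List.mem_map]
      rintro _ ⟨p, -, rfl⟩ ⟨q, -, h⟩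
      exact hij (List.cons.inj h).1.symm
  · simp only [List.mem_flatten, List.mem_map, exists_exists_and_eq_and, List.mem_permutations]
    constructor
    · intro h
      cases p with
      | nil => exact absurd h.nil_eq.symm hne
      | cons i p =>
        have hi : i ∈ l := h.subset List.mem_cons_self
        exact ⟨i, hi, p, (h.trans (List.perm_cons_erase hi)).cons_inv, rfl⟩
    · rintro ⟨i, hi, q, hq, rfl⟩
      exact (hq.cons i).trans (List.perm_cons_erase hi).symm

theorem List.Nodup.sum_map_permutations {α M : Type*} [DecidableEq α] [AddCommMonoid M]
    {l : List α} (hl : l.Nodup) (hne : l ≠ []) (f : List α → M) :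
    (l.permutations.map f).sum =
      (l.map fun i => ((l.erase i).permutations.map fun p => f (i :: p)).sum).sum := by
  rw [((hl.permutations_perm_flatten hne).map f).sum_eq, List.map_flatten, List.sum_flatten,
    List.map_map]
  simp only [Function.comp_def, List.map_map]

theorem sum_powerset_sum_mem {α M : Type*} [DecidableEq α] [AddCommMonoid M] (U : Finset α)
    (g : Finset α → α → M) :
    ∑ K ∈ U.powerset, ∑ i ∈ K, g K i =
      ∑ i ∈ U, ∑ K ∈ (U.erase i).powerset, g (insert i K) i := by
  rw [sum_comm' (s' := fun i => (U.erase i).powerset.image (insert i))]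
  · refine sum_congr rfl fun i _ => sum_image ?_
    intro K hK L hL h
    simp only [coe_powerset, Set.mem_preimage, Set.mem_powerset_iff, coe_subset] at hK hL
    rw [← erase_insert (notMem_mono hK (U.notMem_erase i)), h,
      erase_insert (notMem_mono hL (U.notMem_erase i))]
  · intro K i
    simp only [mem_powerset, mem_image]
    constructor
    · rintro ⟨hKU, hiK⟩
      exact ⟨⟨K.erase i, erase_subset_erase i hKU, insert_erase hiK⟩, hKU hiK⟩
    · rintro ⟨⟨L, hL, rfl⟩, hiU⟩
      exact ⟨insert_subset hiU (hL.trans (U.erase_subset i)), mem_insert_self i L⟩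

theorem sum_map_sort {α M : Type*} [LinearOrder α] [AddCommMonoid M] (K : Finset α) (f : α → M) :
    ((K.sort (· ≤ ·)).map f).sum = ∑ i ∈ K, f i := by
  rw [((K.sort_perm_toList _).map f).sum_eq, sum_map_toList]

theorem sort_erase_perm {α : Type*} [LinearOrder α] (K : Finset α) (i : α) :
    ((K.sort (· ≤ ·)).erase i).Perm ((K.erase i).sort (· ≤ ·)) := by
  refine (List.perm_ext_iff_of_nodup ((K.sort_nodup _).erase i) ((K.erase i).sort_nodup _)).2
    fun a => ?_
  rw [(K.sort_nodup _).mem_erase_iff, mem_sort, mem_sort, mem_erase]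

section NullModel

variable {n : ℕ} (lam : Fin n → ℝ)

noncomputable def permSum (C : ℝ) (K : Finset (Fin n)) : ℝ :=
  ((K.sort (· ≤ ·)).permutations.map (ordProd lam C)).sum

theorem permSum_empty (C : ℝ) : permSum lam C ∅ = 1 := by
  simp [permSum, ordProd]

theorem permSum_eq_sum_erase (C : ℝ) {K : Finset (Fin n)} (hK : K.Nonempty) :
    permSum lam C K = ∑ i ∈ K, lam i / (∑ j ∈ K, lam j + C) * permSum lam C (K.erase i) := by
  have hne : K.sort (· ≤ ·) ≠ [] := by
    simpa [← List.length_pos_iff, length_sort] using hK.card_pos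
  rw [permSum, (K.sort_nodup _).sum_map_permutations hne, sum_map_sort]
  refine sum_congr rfl fun i hi => ?_
  have hcons : ∀ p ∈ ((K.sort (· ≤ ·)).erase i).permutations,
      ordProd lam C (i :: p) = lam i / (∑ j ∈ K, lam j + C) * ordProd lam C p := by
    intro p hp
    have hperm : (i :: p).Perm (K.sort (· ≤ ·)) :=
      ((List.mem_permutations.1 hp).cons i).trans (List.perm_cons_erase ((K.mem_sort _).2 hi)).symm
    rw [ordProd, (hperm.map lam).sum_eq, sum_map_sort]
  rw [List.map_congr_left hcons, List.sum_map_mul_left, permSum,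
    (((sort_erase_perm K i).permutations).map _).sum_eq]

noncomputable def restrictedNullProb (lobs : ℝ) (U K : Finset (Fin n)) : ℝ :=
  lobs / (lobs + ∑ i ∈ U \ K, lam i) * permSum lam (lobs + ∑ i ∈ U \ K, lam i) K

theorem nullProb_eq_restrictedNullProb_univ (lobs : ℝ) (K : Finset (Fin n)) :
    nullProb lam lobs K = restrictedNullProb lam lobs univ K := by
  rw [nullProb, List.sum_map_mul_left, restrictedNullProb, permSum, compl_eq_univ_sdiff]

theorem restrictedNullProb_eq_ite_add_sum_erase (lobs : ℝ) {U K : Finset (Fin n)}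
    (hKU : K ⊆ U) :
    restrictedNullProb lam lobs U K =
      (if K = ∅ then lobs / (lobs + ∑ i ∈ U, lam i) else 0) +
        ∑ i ∈ K, lam i / (lobs + ∑ j ∈ U, lam j) *
          restrictedNullProb lam lobs (U.erase i) (K.erase i) := by
  rcases K.eq_empty_or_nonempty with rfl | hK
  · simp [restrictedNullProb, permSum_empty]
  have hT : ∑ j ∈ K, lam j + (lobs + ∑ j ∈ U \ K, lam j) = lobs + ∑ j ∈ U, lam j := by
    rw [← sum_sdiff hKU]
    ring
  rw [if_neg hK.ne_empty, zero_add, restrictedNullProb, permSum_eq_sum_erase lam _ hK, hT, mul_sum]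
  refine sum_congr rfl fun i hi => ?_
  rw [restrictedNullProb, ← erase_sdiff_distrib, erase_eq_of_notMem fun h => (mem_sdiff.1 h).2 hi]
  ring

theorem sum_restrictedNullProb {lobs : ℝ} (hlam : ∀ i, 0 ≤ lam i) (hlobs : 0 < lobs)
    (U : Finset (Fin n)) : ∑ K ∈ U.powerset, restrictedNullProb lam lobs U K = 1 := by
  induction U using Finset.strongInduction with
  | _ U ih =>
  set T := lobs + ∑ i ∈ U, lam i
  have hT : T ≠ 0 := (add_pos_of_pos_of_nonneg hlobs (sum_nonneg fun i _ => hlam i)).ne'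
  calc ∑ K ∈ U.powerset, restrictedNullProb lam lobs U K
      = ∑ K ∈ U.powerset, ((if K = ∅ then lobs / T else 0) +
          ∑ i ∈ K, lam i / T * restrictedNullProb lam lobs (U.erase i) (K.erase i)) :=
        sum_congr rfl fun K hK =>
          restrictedNullProb_eq_ite_add_sum_erase lam lobs (mem_powerset.1 hK)
    _ = lobs / T + ∑ i ∈ U, lam i / T *
          ∑ K ∈ (U.erase i).powerset, restrictedNullProb lam lobs (U.erase i) K := by
        rw [sum_add_distrib, sum_ite_eq', if_pos (empty_mem_powerset U), sum_powerset_sum_mem]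
        refine congrArg _ (sum_congr rfl fun i _ => ?_)
        rw [mul_sum]
        refine sum_congr rfl fun K hK => ?_
        rw [erase_insert (notMem_mono (mem_powerset.1 hK) (U.notMem_erase i))]
    _ = lobs / T + ∑ i ∈ U, lam i / T := by
        congr 1
        exact sum_congr rfl fun i hi => by rw [ih (U.erase i) (erase_ssubset hi), mul_one]
    _ = 1 := by rw [← sum_div, ← add_div, div_self hT]

end NullModel

theorem timex_null_model_sums_to_one_general
    (n : ℕ) (lam : Fin n → ℝ) (lobs : ℝ)
    (hlam : ∀ i, 0 < lam i) (hlobs : 0 < lobs) :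
    ∑ K : Finset (Fin n), nullProb lam lobs K = 1 := by
  simp_rw [nullProb_eq_restrictedNullProb_univ, ← powerset_univ]
  exact sum_restrictedNullProb lam (fun i => (hlam i).le) hlobs univ

/-- the TiMEx null-model genotype probabilities form a probability
distribution on the subsets `K ⊆ {1,…,n}`. -/
theorem timex_null_model_sums_to_one
    (n : ℕ) (hn : 1 ≤ n) (lam : Fin n → ℝ) (lobs : ℝ)
    (hlam : ∀ i, 0 < lam i) (hlobs : 0 < lobs) :
    ∑ K : Finset (Fin n), nullProb lam lobs K = 1 :=
  timex_null_model_sums_to_one_general n lam lobs hlam hlobs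
end

section
/- (Non-identifiability of the null model up to λ_obs.) Fix n ≥ 1 and rates λ_1, ..., λ_n > 0, λ_obs > 0, and let c > 0. Then for every K ⊆ {1,...,n}, the null-model genotype probability computed from the scaled parameters (cλ_1, ..., cλ_n, cλ_obs) equals the null-model genotype probability computed from (λ_1, ..., λ_n, λ_obs); that is, the genotype distribution P(g_K | θ_Null) is invariant under simultaneous rescaling of all rates. -/
open MeasureTheory ProbabilityTheory Finset

lemma ordProd_scale {n : ℕ} (lam : Fin n → ℝ) (C c : ℝ) (hc : c ≠ 0) :
    ∀ l : List (Fin n), ordProd (fun i => c * lam i) (c * C) l = ordProd lam C l := by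
  intro l
  induction l with
  | nil => rfl
  | cons i rest ih =>
    have hsum : ∀ m : List (Fin n), (m.map (fun i => c * lam i)).sum = c * (m.map lam).sum := by
      intro m
      induction m with
      | nil => simp
      | cons a t iht => simp [iht]; ring
    simp only [ordProd, ih, hsum]
    congr 1
    rw [show c * ((List.map lam (i :: rest)).sum) + c * C
        = c * ((List.map lam (i :: rest)).sum + C) by ring]
    rw [mul_div_mul_left _ _ hc]

/-- Proposition 1, first half: the TiMEx null-model genotype distribution is
invariant under simultaneous rescaling of all rates by `c > 0`, i.e. the null model is
identifiable only up to `λ_obs`. -/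
theorem timex_null_model_scale_invariant
    (n : ℕ) (hn : 1 ≤ n) (lam : Fin n → ℝ) (lobs : ℝ)
    (hlam : ∀ i, 0 < lam i) (hlobs : 0 < lobs) (c : ℝ) (hc : 0 < c) :
    ∀ K : Finset (Fin n),
      nullProb (fun i => c * lam i) (c * lobs) K = nullProb lam lobs K := by
  intro K
  have hc' : c ≠ 0 := ne_of_gt hc
  unfold nullProb
  congr 1
  apply List.map_congr_left
  intro l _
  have hs : ∑ i ∈ Kᶜ, c * lam i = c * ∑ i ∈ Kᶜ, lam i := by rw [Finset.mul_sum]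
  rw [hs, show c * lobs + c * ∑ i ∈ Kᶜ, lam i = c * (lobs + ∑ i ∈ Kᶜ, lam i) by ring,
    ordProd_scale lam _ c hc', mul_div_mul_left _ _ hc']
end

section
/- (Identifiability of the normalized null model.) Fix n ≥ 1 and suppose λ = (λ_1, ..., λ_n) and λ' = (λ'_1, ..., λ'_n) are vectors of strictly positive rates such that, with λ_obs = 1, the null-model genotype probabilities agree for every K ⊆ {1,...,n}: P(g_K | λ, λ_obs = 1) = P(g_K | λ', λ_obs = 1). Then λ = λ'. -/
open MeasureTheory ProbabilityTheory Finset

/-- Proposition 1, second half: with the observation rate normalized to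
`λ_obs = 1`, the TiMEx null model is identifiable: if two positive rate vectors give the
same genotype distribution, they are equal. -/
theorem timex_null_model_identifiable
    (n : ℕ) (hn : 1 ≤ n) (lam lam' : Fin n → ℝ)
    (hlam : ∀ i, 0 < lam i) (hlam' : ∀ i, 0 < lam' i)
    (h : ∀ K : Finset (Fin n), nullProb lam 1 K = nullProb lam' 1 K) :
    lam = lam' := by
  haveI : Nonempty (Fin n) := Fin.pos_iff_nonempty.mp hn
  have hS0 : (0:ℝ) < ∑ i, lam i := Finset.sum_pos (fun i _ => hlam i) Finset.univ_nonempty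
  have hS0' : (0:ℝ) < ∑ i, lam' i := Finset.sum_pos (fun i _ => hlam' i) Finset.univ_nonempty
  have h0 := h ∅
  simp [nullProb, ordProd] at h0
  have hS : ∑ i, lam i = ∑ i, lam' i := h0
  funext i
  have hc : ∑ j ∈ ({i} : Finset (Fin n))ᶜ, lam j = (∑ j, lam j) - lam i := by
    have := Finset.sum_compl_add_sum ({i} : Finset (Fin n)) lam
    simp at this; linarith
  have hc' : ∑ j ∈ ({i} : Finset (Fin n))ᶜ, lam' j = (∑ j, lam' j) - lam' i := by
    have := Finset.sum_compl_add_sum ({i} : Finset (Fin n)) lam'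
    simp at this; linarith
  have h1 := h {i}
  simp [nullProb, ordProd, List.permutations, hc, hc', ← hS] at h1
  have hiS : lam i ≤ ∑ j, lam j := Finset.single_le_sum (fun j _ => (hlam j).le) (mem_univ i)
  have hiS' : lam' i ≤ ∑ j, lam j := hS ▸ Finset.single_le_sum (fun j _ => (hlam' j).le) (mem_univ i)
  have d1 : (0:ℝ) < 1 + (∑ j, lam j - lam i) := by linarith
  have d2 : (0:ℝ) < 1 + (∑ j, lam j - lam' i) := by linarith
  have d3 : (0:ℝ) ≠ lam i + (1 + (∑ j, lam j - lam i)) := by nlinarith [hlam i]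
  have d4 : (0:ℝ) ≠ lam' i + (1 + (∑ j, lam j - lam' i)) := by nlinarith [hlam' i]
  field_simp at h1
  have hp : (0:ℝ) < 1 + ∑ j, lam j := by linarith
  have key : (lam i - lam' i) * (1 + ∑ j, lam j)^2 = 0 := by ring_nf; ring_nf at h1; linarith
  have := mul_eq_zero.mp key
  rcases this with h' | h'
  · linarith
  · nlinarith
end

section
/- (Non-identifiability of the mutual exclusivity model up to λ_obs.) Fix n ≥ 1, rates λ_1, ..., λ_n > 0, λ_obs > 0, μ ∈ [0,1], and c > 0. Then for every K ⊆ {1,...,n}, the mutual-exclusivity-model genotype probability computed from (cλ_1, ..., cλ_n, cλ_obs, μ) equals that computed from (λ_1, ..., λ_n, λ_obs, μ); that is, the genotype distribution P(g_K | θ_ME) is invariant under simultaneous rescaling of all rates with the degree μ held fixed. -/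
open MeasureTheory ProbabilityTheory Finset

/-- Proposition 2, first half: the TiMEx mutual-exclusivity-model genotype
distribution is invariant under simultaneous rescaling of all rates by `c > 0` with the
degree `μ` held fixed, i.e. the model is identifiable only up to `λ_obs`. -/
theorem timex_me_model_scale_invariant
    (n : ℕ) (hn : 1 ≤ n) (lam : Fin n → ℝ) (lobs : ℝ)
    (hlam : ∀ i, 0 < lam i) (hlobs : 0 < lobs)
    (mu : ℝ) (hmu : mu ∈ Set.Icc (0 : ℝ) 1) (c : ℝ) (hc : 0 < c) :
    ∀ K : Finset (Fin n),
      meProb (fun i => c * lam i) (c * lobs) mu K = meProb lam lobs mu K := by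
  intro K
  have hc' : c ≠ 0 := ne_of_gt hc
  have hsum : ∀ s : Finset (Fin n), (∑ i ∈ s, c * lam i) = c * ∑ i ∈ s, lam i := by
    intro s; rw [Finset.mul_sum]
  have hnull : nullProb (fun i => c * lam i) (c * lobs) K = nullProb lam lobs K := by
    unfold nullProb
    congr 1
    apply List.map_congr_left
    intro l _
    rw [hsum, show c * lobs + c * ∑ i ∈ Kᶜ, lam i = c * (lobs + ∑ i ∈ Kᶜ, lam i) by ring,
      mul_div_mul_left _ _ hc', ordProd_scale lam _ c hc']
  unfold meProb
  rw [hsum, hnull]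
  congr 1
  · rw [show c * lobs + c * ∑ i, lam i = c * (lobs + ∑ i, lam i) by ring,
      mul_div_mul_left _ _ hc']
  congr 1
  apply Finset.sum_congr rfl
  intro k _
  beta_reduce
  rw [show c * lobs + c * ∑ i, lam i = c * (lobs + ∑ i, lam i) by ring,
    mul_div_mul_left _ _ hc',
    show c * lobs + mu * (c * ∑ i, lam i - c * lam k) = c * (lobs + mu * (∑ i, lam i - lam k)) by ring,
    show c * (lobs + ∑ i, lam i) - c * lam k = c * (lobs + ∑ i, lam i - lam k) by ring,
    mul_div_mul_left _ _ hc']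
end

section
/- (Identifiability of the normalized mutual exclusivity model.) Fix n ≥ 2 and suppose (λ, μ) and (λ', μ'), with λ, λ' vectors of strictly positive rates and μ, μ' ∈ [0,1], are such that, with λ_obs = 1, the mutual-exclusivity-model genotype probabilities agree for every K ⊆ {1,...,n}: P(g_K | λ, μ, λ_obs = 1) = P(g_K | λ', μ', λ_obs = 1). Then λ = λ' and μ = μ'. -/
open MeasureTheory ProbabilityTheory Finset

/-- Strict monotonicity of `x ↦ x(1+m(S−x))/(1+S−x)` on `(0,S)` for `m ∈ [0,1]`. -/
private lemma eFun_strictMono {S x y m : ℝ} (hx : 0 < x) (hxy : x < y) (hyS : y < S)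
    (hm0 : 0 ≤ m) (hm1 : m ≤ 1) :
    x * (1 + m * (S - x)) / (1 + S - x) < y * (1 + m * (S - y)) / (1 + S - y) := by
  have hdx : 0 < 1 + S - x := by linarith
  have hdy : 0 < 1 + S - y := by linarith
  rw [div_lt_div_iff₀ hdx hdy]
  rcases le_total ((1 + S - x) * (1 + S - y)) (1 + S) with hc | hc
  · nlinarith [mul_nonneg (sub_nonneg.2 hm1)
      (mul_nonneg (by linarith : (0:ℝ) ≤ y - x)
        (by linarith : (0:ℝ) ≤ 1 + S - (1 + S - x) * (1 + S - y))),
      mul_pos (by linarith : (0:ℝ) < y - x) (mul_pos hdx hdy)]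
  · nlinarith [mul_nonneg hm0
      (mul_nonneg (by linarith : (0:ℝ) ≤ y - x)
        (by linarith : (0:ℝ) ≤ (1 + S - x) * (1 + S - y) - (1 + S))),
      mul_pos (by linarith : (0:ℝ) < y - x) (by linarith : (0:ℝ) < 1 + S)]

/-- Monotonicity in `m` of `x ↦ x(1+m(S−x))/(1+S−x)` for `0 ≤ x ≤ S`. -/
private lemma eFun_mono_mu {S x m m' : ℝ} (hx : 0 ≤ x) (hxS : x ≤ S) (hm : m ≤ m')
    (hd : 0 < 1 + S - x) :
    x * (1 + m * (S - x)) / (1 + S - x) ≤ x * (1 + m' * (S - x)) / (1 + S - x) := by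
  gcongr

private lemma timex_aux
    (n : ℕ) (hn : 2 ≤ n) (lam lam' : Fin n → ℝ)
    (hlam : ∀ i, 0 < lam i) (hlam' : ∀ i, 0 < lam' i)
    (mu mu' : ℝ) (hmu : mu ∈ Set.Icc (0 : ℝ) 1) (hmu' : mu' ∈ Set.Icc (0 : ℝ) 1)
    (h : ∀ K : Finset (Fin n), meProb lam 1 mu K = meProb lam' 1 mu' K)
    (hle : mu ≤ mu') :
    lam = lam' ∧ mu = mu' := by
  obtain ⟨hmu0, hmu1⟩ := hmu
  obtain ⟨hmu'0, hmu'1⟩ := hmu'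
  set S := ∑ i, lam i with hS
  -- sums are equal
  have hsum : S = ∑ i, lam' i := by
    have h0 := h ∅; simpa [meProb] using h0
  -- every rate is strictly below the total sum
  have hltS : ∀ k : Fin n, lam k < S := by
    intro k
    have hjne : ∃ j : Fin n, j ≠ k := by
      rcases Decidable.eq_or_ne k ⟨0, by omega⟩ with hk | hk
      · exact ⟨⟨1, by omega⟩, by subst hk; simp [Fin.ext_iff]⟩
      · exact ⟨⟨0, by omega⟩, fun hj => hk hj.symm⟩
    obtain ⟨j, hj⟩ := hjne
    exact Finset.single_lt_sum hj (mem_univ k) (mem_univ j) (hlam j) (fun i _ _ => (hlam i).le)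
  have hltS' : ∀ k : Fin n, lam' k < S := by
    intro k
    have hjne : ∃ j : Fin n, j ≠ k := by
      rcases Decidable.eq_or_ne k ⟨0, by omega⟩ with hk | hk
      · exact ⟨⟨1, by omega⟩, by subst hk; simp [Fin.ext_iff]⟩
      · exact ⟨⟨0, by omega⟩, fun hj => hk hj.symm⟩
    obtain ⟨j, hj⟩ := hjne
    rw [hsum]
    exact Finset.single_lt_sum hj (mem_univ k) (mem_univ j) (hlam' j) (fun i _ _ => (hlam' i).le)
  have hSpos : 0 < S := lt_trans (hlam ⟨0, by omega⟩) (hltS ⟨0, by omega⟩)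
  have h1S : (0:ℝ) < 1 + S := by linarith
  -- singleton equations, with the common factor 1/(1+S) removed
  have hsing : ∀ k : Fin n,
      lam k * (1 + mu * (S - lam k)) / (1 + S - lam k)
        = lam' k * (1 + mu' * (S - lam' k)) / (1 + S - lam' k) := by
    intro k
    have h1 := h {k}
    simp [meProb] at h1
    rw [← hsum] at h1
    have hdx : (0:ℝ) < 1 + S - lam k := by have := hltS k; linarith
    have hdy : (0:ℝ) < 1 + S - lam' k := by have := hltS' k; linarith
    rw [div_mul_div_comm, div_mul_div_comm,
      div_eq_div_iff (mul_pos h1S hdx).ne' (mul_pos h1S hdy).ne'] at h1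
    rw [div_eq_div_iff hdx.ne' hdy.ne']
    have h2 : (1 + S) * (lam k * (1 + mu * (S - lam k)) * (1 + S - lam' k))
        = (1 + S) * (lam' k * (1 + mu' * (S - lam' k)) * (1 + S - lam k)) := by
      linear_combination h1
    exact mul_left_cancel₀ (ne_of_gt h1S) h2
  -- pointwise lam' ≤ lam
  have hge : ∀ k : Fin n, lam' k ≤ lam k := by
    intro k
    by_contra hcon
    push_neg at hcon
    have hdy : (0:ℝ) < 1 + S - lam' k := by have := hltS' k; linarith
    have hstep : lam' k * (1 + mu * (S - lam' k)) / (1 + S - lam' k)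
        ≤ lam' k * (1 + mu' * (S - lam' k)) / (1 + S - lam' k) :=
      eFun_mono_mu (hlam' k).le (hltS' k).le hle hdy
    have hlt : lam k * (1 + mu * (S - lam k)) / (1 + S - lam k)
        < lam' k * (1 + mu * (S - lam' k)) / (1 + S - lam' k) :=
      eFun_strictMono (hlam k) hcon (hltS' k) hmu0 hmu1
    have := hsing k
    linarith
  -- equality of the rates from equal sums
  have hlameq : lam = lam' := by
    funext k
    have := (Finset.sum_eq_sum_iff_of_le (fun i _ => hge i)).1 (hsum.symm)
    exact (this k (mem_univ k)).symm
  -- equality of mu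
  refine ⟨hlameq, ?_⟩
  set k0 : Fin n := ⟨0, by omega⟩
  have hx := hlam k0
  have hxS := hltS k0
  have hd : (0:ℝ) < 1 + S - lam k0 := by linarith
  have h3 := hsing k0
  rw [← hlameq] at h3
  rw [div_eq_div_iff hd.ne' hd.ne'] at h3
  have h4 : (mu - mu') * (lam k0 * (S - lam k0) * (1 + S - lam k0)) = 0 := by
    linear_combination h3
  have h5 : lam k0 * (S - lam k0) * (1 + S - lam k0) ≠ 0 :=
    ne_of_gt (mul_pos (mul_pos hx (by linarith)) hd)
  have := (mul_eq_zero.1 h4).resolve_right h5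
  linarith

/-- Proposition 2, second half: with the observation rate normalized to
`λ_obs = 1` and `n ≥ 2`, the TiMEx mutual exclusivity model is identifiable: if two
parameter sets `(λ, μ)` and `(λ', μ')` give the same genotype distribution, they are
equal. -/
theorem timex_me_model_identifiable
    (n : ℕ) (hn : 2 ≤ n) (lam lam' : Fin n → ℝ)
    (hlam : ∀ i, 0 < lam i) (hlam' : ∀ i, 0 < lam' i)
    (mu mu' : ℝ) (hmu : mu ∈ Set.Icc (0 : ℝ) 1) (hmu' : mu' ∈ Set.Icc (0 : ℝ) 1)
    (h : ∀ K : Finset (Fin n), meProb lam 1 mu K = meProb lam' 1 mu' K) :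
    lam = lam' ∧ mu = mu' := by
  rcases le_total mu mu' with hle | hle
  · exact timex_aux n hn lam lam' hlam hlam' mu mu' hmu hmu' h hle
  · obtain ⟨h1, h2⟩ := timex_aux n hn lam' lam hlam' hlam mu' mu hmu' hmu
      (fun K => (h K).symm) hle
    exact ⟨h1.symm, h2.symm⟩
end

section
/- Let T_obs, T_1, T_2 be independent exponential random variables with rates 1, λ_1, λ_2 > 0 respectively, and set X_i = 1 if T_i ≤ T_obs and X_i = 0 otherwise (i = 1, 2). Then P(X_1=0, X_2=0) = 1/(1 + λ_1 + λ_2), P(X_1=1, X_2=0) = λ_1 / ((1 + λ_1 + λ_2)(1 + λ_2)), P(X_1=0, X_2=1) = λ_2 / ((1 + λ_1 + λ_2)(1 + λ_1)), and P(X_1=1, X_2=1) = [λ_1 λ_2 / (1 + λ_1 + λ_2)] · [1/(1 + λ_1) + 1/(1 + λ_2)]. -/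
/-!
Given `T_obs = t ≥ 0`, gene `i` is unaltered with probability `exp (-λ_i t)`, and the product
`exp (-λ_1 t) exp (-λ_2 t)` is the survival function of `Exp(λ_1 + λ_2)`. Integrating
`exp (-c t)` against `Exp(r)` gives `r / (r + c)`, because the density `r exp (-r t)` times
`exp (-c t)` is `r / (r + c)` times the density of `Exp(r + c)`. Hence
`P(X_1 = 0) = 1/(1+λ_1)`, `P(X_2 = 0) = 1/(1+λ_2)` and `P(X_1 = X_2 = 0) = 1/(1+λ_1+λ_2)`;
the other three genotype probabilities follow by inclusion–exclusion.
-/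

open MeasureTheory ProbabilityTheory Real Set
open scoped ENNReal

lemma MeasureTheory.Measure.prod_prod_apply_eq_lintegral {α β γ : Type*} [MeasurableSpace α]
    [MeasurableSpace β] [MeasurableSpace γ] {μ : Measure α} {ν : Measure β} {ρ : Measure γ}
    [SFinite ν] [SFinite ρ] {S : Set (α × β × γ)} (hS : MeasurableSet S) {A : α → Set β}
    {B : α → Set γ} (hAB : ∀ t, Prod.mk t ⁻¹' S = A t ×ˢ B t) :
    μ.prod (ν.prod ρ) S = ∫⁻ t, ν (A t) * ρ (B t) ∂μ := by
  simp_rw [Measure.prod_apply hS, hAB, Measure.prod_prod]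

namespace ProbabilityTheory

lemma expMeasure_eq_withDensity (r : ℝ) :
    expMeasure r = volume.withDensity (exponentialPDF r) := rfl

instance (r : ℝ) : SFinite (expMeasure r) := by
  rw [expMeasure_eq_withDensity]; infer_instance

lemma measurable_exponentialPDF (r : ℝ) : Measurable (exponentialPDF r) :=
  (measurable_exponentialPDFReal r).ennreal_ofReal

lemma ae_nonneg_expMeasure (r : ℝ) : ∀ᵐ t ∂expMeasure r, 0 ≤ t := by
  rw [expMeasure_eq_withDensity, ae_withDensity_iff (measurable_exponentialPDF r)]
  refine ae_of_all _ fun t ht => ?_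
  by_contra! h
  exact ht (exponentialPDF_of_neg h)

lemma expMeasure_Ioi {r t : ℝ} (hr : 0 < r) (ht : 0 ≤ t) :
    expMeasure r (Ioi t) = ENNReal.ofReal (exp (-(r * t))) := by
  have := isProbabilityMeasure_expMeasure hr
  rw [← ofReal_measureReal, ← compl_Iic, measureReal_compl measurableSet_Iic,
    probReal_univ, ← cdf_eq_real, cdf_expMeasure_eq hr, if_pos ht, sub_sub_cancel]

lemma expMeasure_Ioi_mul_expMeasure_Ioi {a b t : ℝ} (ha : 0 < a) (hb : 0 < b) (ht : 0 ≤ t) :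
    expMeasure a (Ioi t) * expMeasure b (Ioi t) = expMeasure (a + b) (Ioi t) := by
  rw [expMeasure_Ioi ha ht, expMeasure_Ioi hb ht, expMeasure_Ioi (add_pos ha hb) ht,
    ← ENNReal.ofReal_mul (exp_pos _).le, ← exp_add, add_mul, neg_add]

lemma exponentialPDF_mul_exp_neg {r c : ℝ} (hr : 0 ≤ r) (hrc : 0 < r + c) (t : ℝ) :
    exponentialPDF r t * ENNReal.ofReal (exp (-(c * t))) =
      ENNReal.ofReal (r / (r + c)) * exponentialPDF (r + c) t := by
  rcases lt_or_ge t 0 with ht | ht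
  · simp [exponentialPDF_of_neg ht]
  · rw [exponentialPDF_of_nonneg ht, exponentialPDF_of_nonneg ht,
      ← ENNReal.ofReal_mul (by positivity), ← ENNReal.ofReal_mul (by positivity)]
    congr 1
    field_simp
    rw [mul_assoc, ← exp_add]
    ring_nf

lemma lintegral_exp_neg_mul_expMeasure {r c : ℝ} (hr : 0 ≤ r) (hrc : 0 < r + c) :
    ∫⁻ t, ENNReal.ofReal (exp (-(c * t))) ∂expMeasure r = ENNReal.ofReal (r / (r + c)) := by
  rw [expMeasure_eq_withDensity, lintegral_withDensity_eq_lintegral_mul _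
    (measurable_exponentialPDF r) (by fun_prop)]
  simp_rw [Pi.mul_apply, exponentialPDF_mul_exp_neg hr hrc]
  rw [lintegral_const_mul _ (measurable_exponentialPDF _), lintegral_exponentialPDF_eq_one hrc,
    mul_one]

lemma lintegral_expMeasure_Ioi {r c : ℝ} (hr : 0 ≤ r) (hc : 0 < c) :
    ∫⁻ t, expMeasure c (Ioi t) ∂expMeasure r = ENNReal.ofReal (r / (r + c)) := by
  rw [← lintegral_exp_neg_mul_expMeasure hr (by linarith)]
  refine lintegral_congr_ae ?_
  filter_upwards [ae_nonneg_expMeasure r] with t ht using expMeasure_Ioi hc ht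

lemma lintegral_expMeasure_Ioi_mul_expMeasure_Ioi {r a b : ℝ} (hr : 0 ≤ r) (ha : 0 < a)
    (hb : 0 < b) :
    ∫⁻ t, expMeasure a (Ioi t) * expMeasure b (Ioi t) ∂expMeasure r =
      ENNReal.ofReal (r / (r + (a + b))) := by
  rw [← lintegral_expMeasure_Ioi hr (add_pos ha hb)]
  refine lintegral_congr_ae ?_
  filter_upwards [ae_nonneg_expMeasure r] with t ht
    using expMeasure_Ioi_mul_expMeasure_Ioi ha hb ht

lemma iIndepFun.map_prodMk_prodMk_eq_prod {Ω β : Type*} [MeasurableSpace Ω] [MeasurableSpace β]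
    {P : Measure Ω} [IsFiniteMeasure P] {X Y Z : Ω → β} (h : iIndepFun ![X, Y, Z] P)
    (hX : AEMeasurable X P) (hY : AEMeasurable Y P) (hZ : AEMeasurable Z P) :
    P.map (fun ω => (X ω, Y ω, Z ω)) = (P.map X).prod ((P.map Y).prod (P.map Z)) := by
  have hmeas : ∀ i, AEMeasurable (![X, Y, Z] i) P := fun i => by fin_cases i <;> assumption
  have hYZ : IndepFun Y Z P := h.indepFun (i := 1) (j := 2) (by decide)
  have hX_YZ : IndepFun X (fun ω => (Y ω, Z ω)) P :=
    (h.indepFun_prodMk₀ hmeas 1 2 0 (by decide) (by decide)).symm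
  rw [(indepFun_iff_map_prod_eq_prod_map_map hX (hY.prodMk hZ)).1 hX_YZ,
    (indepFun_iff_map_prod_eq_prod_map_map hY hZ).1 hYZ]

end ProbabilityTheory

namespace TiMEx

/-- The law of `(T_obs, T_1, T_2)` in the null model with `λ_obs = 1`. -/
noncomputable abbrev nullLaw (lam1 lam2 : ℝ) : Measure (ℝ × ℝ × ℝ) :=
  (expMeasure 1).prod ((expMeasure lam1).prod (expMeasure lam2))

variable {lam1 lam2 : ℝ}

lemma nullLaw_real_unaltered_fst (hlam1 : 0 < lam1) (hlam2 : 0 < lam2) :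
    (nullLaw lam1 lam2).real {p | ¬ p.2.1 ≤ p.1} = 1 / (1 + lam1) := by
  have := isProbabilityMeasure_expMeasure hlam2
  rw [measureReal_def, Measure.prod_prod_apply_eq_lintegral (by measurability)
    (A := Ioi) (B := fun _ => univ) fun t => by ext; simp]
  simp_rw [measure_univ, mul_one]
  rw [lintegral_expMeasure_Ioi zero_le_one hlam1, ENNReal.toReal_ofReal (by positivity)]

lemma nullLaw_real_unaltered_snd (hlam1 : 0 < lam1) (hlam2 : 0 < lam2) :
    (nullLaw lam1 lam2).real {p | ¬ p.2.2 ≤ p.1} = 1 / (1 + lam2) := by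
  have := isProbabilityMeasure_expMeasure hlam1
  rw [measureReal_def, Measure.prod_prod_apply_eq_lintegral (by measurability)
    (A := fun _ => univ) (B := Ioi) fun t => by ext; simp]
  simp_rw [measure_univ, one_mul]
  rw [lintegral_expMeasure_Ioi zero_le_one hlam2, ENNReal.toReal_ofReal (by positivity)]

lemma nullLaw_real_unaltered_both (hlam1 : 0 < lam1) (hlam2 : 0 < lam2) :
    (nullLaw lam1 lam2).real {p | ¬ p.2.1 ≤ p.1 ∧ ¬ p.2.2 ≤ p.1} = 1 / (1 + lam1 + lam2) := by
  rw [measureReal_def, Measure.prod_prod_apply_eq_lintegral (by measurability)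
    (A := Ioi) (B := Ioi) fun t => by ext; simp,
    lintegral_expMeasure_Ioi_mul_expMeasure_Ioi zero_le_one hlam1 hlam2,
    ENNReal.toReal_ofReal (by positivity), add_assoc]

theorem nullLaw_genotype_probs (hlam1 : 0 < lam1) (hlam2 : 0 < lam2) :
    (nullLaw lam1 lam2).real {p | ¬ p.2.1 ≤ p.1 ∧ ¬ p.2.2 ≤ p.1} = 1 / (1 + lam1 + lam2) ∧
    (nullLaw lam1 lam2).real {p | p.2.1 ≤ p.1 ∧ ¬ p.2.2 ≤ p.1} =
      lam1 / ((1 + lam1 + lam2) * (1 + lam2)) ∧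
    (nullLaw lam1 lam2).real {p | ¬ p.2.1 ≤ p.1 ∧ p.2.2 ≤ p.1} =
      lam2 / ((1 + lam1 + lam2) * (1 + lam1)) ∧
    (nullLaw lam1 lam2).real {p | p.2.1 ≤ p.1 ∧ p.2.2 ≤ p.1} =
      (lam1 * lam2 / (1 + lam1 + lam2)) * (1 / (1 + lam1) + 1 / (1 + lam2)) := by
  have := isProbabilityMeasure_expMeasure hlam1
  have := isProbabilityMeasure_expMeasure hlam2
  have := isProbabilityMeasure_expMeasure one_pos
  set U₁ : Set (ℝ × ℝ × ℝ) := {p | ¬ p.2.1 ≤ p.1}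
  set U₂ : Set (ℝ × ℝ × ℝ) := {p | ¬ p.2.2 ≤ p.1}
  have hU₁ : MeasurableSet U₁ := by measurability
  have hU₂ : MeasurableSet U₂ := by measurability
  have h₁ := nullLaw_real_unaltered_fst hlam1 hlam2
  have h₂ := nullLaw_real_unaltered_snd hlam1 hlam2
  have h₁₂ := nullLaw_real_unaltered_both hlam1 hlam2
  have h10 : {p : ℝ × ℝ × ℝ | p.2.1 ≤ p.1 ∧ ¬ p.2.2 ≤ p.1} = U₂ \ U₁ := by
    ext; simp [U₁, U₂, and_comm]
  have h01 : {p : ℝ × ℝ × ℝ | ¬ p.2.1 ≤ p.1 ∧ p.2.2 ≤ p.1} = U₁ \ U₂ := by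
    ext; simp [U₁, U₂]
  have h11 : {p : ℝ × ℝ × ℝ | p.2.1 ≤ p.1 ∧ p.2.2 ≤ p.1} = (U₁ ∪ U₂)ᶜ := by
    ext; simp [U₁, U₂]
  change (nullLaw lam1 lam2).real (U₁ ∩ U₂) = _ at h₁₂
  have hpos₁ : 1 + lam1 ≠ 0 := by positivity
  have hpos₂ : 1 + lam2 ≠ 0 := by positivity
  have hpos : 1 + lam1 + lam2 ≠ 0 := by positivity
  refine ⟨h₁₂, ?_, ?_, ?_⟩
  · rw [h10, eq_sub_of_add_eq (measureReal_sdiff_add_inter hU₁), inter_comm, h₂, h₁₂]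
    field_simp
    ring
  · rw [h01, eq_sub_of_add_eq (measureReal_sdiff_add_inter hU₂), h₁, h₁₂]
    field_simp
    ring
  · rw [h11, measureReal_compl (hU₁.union hU₂), probReal_univ,
      eq_sub_of_add_eq (measureReal_union_add_inter hU₂), h₁, h₂, h₁₂]
    field_simp
    ring

end TiMEx

/-- the two-gene TiMEx null model with `λ_obs = 1`: for independent
exponentials `T_obs ~ Exp(1)`, `T_1 ~ Exp(λ_1)`, `T_2 ~ Exp(λ_2)` and alteration
indicators `X_i = 1 ↔ T_i ≤ T_obs`, the four genotype probabilities are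
`P(0,0) = 1/(1+λ_1+λ_2)`, `P(1,0) = λ_1/((1+λ_1+λ_2)(1+λ_2))`,
`P(0,1) = λ_2/((1+λ_1+λ_2)(1+λ_1))`, and
`P(1,1) = [λ_1 λ_2/(1+λ_1+λ_2)]·[1/(1+λ_1) + 1/(1+λ_2)]`. -/
theorem timex_two_gene_null_genotype_probs
    {Ω : Type*} [MeasurableSpace Ω] (P : Measure Ω) [IsProbabilityMeasure P]
    (lam1 lam2 : ℝ) (hlam1 : 0 < lam1) (hlam2 : 0 < lam2)
    (T1 T2 Tobs : Ω → ℝ)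
    (hT1 : Measure.map T1 P = expMeasure lam1)
    (hT2 : Measure.map T2 P = expMeasure lam2)
    (hTobs : Measure.map Tobs P = expMeasure 1)
    (hindep : iIndepFun ![Tobs, T1, T2] P) :
    (P {ω | ¬ T1 ω ≤ Tobs ω ∧ ¬ T2 ω ≤ Tobs ω}).toReal = 1 / (1 + lam1 + lam2) ∧
    (P {ω | T1 ω ≤ Tobs ω ∧ ¬ T2 ω ≤ Tobs ω}).toReal =
      lam1 / ((1 + lam1 + lam2) * (1 + lam2)) ∧
    (P {ω | ¬ T1 ω ≤ Tobs ω ∧ T2 ω ≤ Tobs ω}).toReal =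
      lam2 / ((1 + lam1 + lam2) * (1 + lam1)) ∧
    (P {ω | T1 ω ≤ Tobs ω ∧ T2 ω ≤ Tobs ω}).toReal =
      (lam1 * lam2 / (1 + lam1 + lam2)) * (1 / (1 + lam1) + 1 / (1 + lam2)) := by
  have aemeasurable_of_map_eq {T : Ω → ℝ} {r : ℝ} (hr : 0 < r) (hT : P.map T = expMeasure r) :
      AEMeasurable T P :=
    .of_map_ne_zero (hT ▸ (isProbabilityMeasure_expMeasure hr).ne_zero)
  have hTobs' := aemeasurable_of_map_eq one_pos hTobs
  have hT1' := aemeasurable_of_map_eq hlam1 hT1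
  have hT2' := aemeasurable_of_map_eq hlam2 hT2
  have hlaw : P.map (fun ω => (Tobs ω, T1 ω, T2 ω)) = TiMEx.nullLaw lam1 lam2 := by
    rw [hindep.map_prodMk_prodMk_eq_prod hTobs' hT1' hT2', hTobs, hT1, hT2]
  have transfer {E : Set (ℝ × ℝ × ℝ)} (hE : MeasurableSet E) :
      P.real ((fun ω => (Tobs ω, T1 ω, T2 ω)) ⁻¹' E) = (TiMEx.nullLaw lam1 lam2).real E := by
    rw [← hlaw, map_measureReal_apply_of_aemeasurable (hTobs'.prodMk (hT1'.prodMk hT2')) hE]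
  obtain ⟨h00, h10, h01, h11⟩ := TiMEx.nullLaw_genotype_probs hlam1 hlam2
  exact ⟨(transfer (by measurability)).trans h00, (transfer (by measurability)).trans h10,
    (transfer (by measurability)).trans h01, (transfer (by measurability)).trans h11⟩
end

section
/- Fix λ_1, λ_2 > 0 and μ ∈ [0,1]. In the two-gene TiMEx mutual exclusivity model with λ_obs = 1, the genotype probabilities are: P(0,0) = 1/(1 + λ_1 + λ_2); P(1,0) = [λ_1 / (1 + λ_1 + λ_2)] · (1 + μ λ_2)/(1 + λ_2); P(0,1) = [λ_2 / (1 + λ_1 + λ_2)] · (1 + μ λ_1)/(1 + λ_1); P(1,1) = (1 − μ) · [λ_1 λ_2 / (1 + λ_1 + λ_2)] · [1/(1 + λ_1) + 1/(1 + λ_2)]; and these four probabilities sum to 1. -/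
open MeasureTheory ProbabilityTheory Finset

/-- the genotype probabilities of the two-gene TiMEx mutual exclusivity
model with `λ_obs = 1` and degree `μ`: `P(0,0) = 1/(1+λ_1+λ_2)`,
`P(1,0) = [λ_1/(1+λ_1+λ_2)]·(1+μλ_2)/(1+λ_2)`,
`P(0,1) = [λ_2/(1+λ_1+λ_2)]·(1+μλ_1)/(1+λ_1)`,
`P(1,1) = (1−μ)·[λ_1λ_2/(1+λ_1+λ_2)]·[1/(1+λ_1)+1/(1+λ_2)]`, and these sum to `1`. -/
theorem timex_two_gene_me_genotype_probs
    (lam : Fin 2 → ℝ) (hlam : ∀ i, 0 < lam i) (mu : ℝ) (hmu : mu ∈ Set.Icc (0 : ℝ) 1) :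
    meProb lam 1 mu (∅ : Finset (Fin 2)) = 1 / (1 + lam 0 + lam 1) ∧
    meProb lam 1 mu {0} =
      (lam 0 / (1 + lam 0 + lam 1)) * ((1 + mu * lam 1) / (1 + lam 1)) ∧
    meProb lam 1 mu {1} =
      (lam 1 / (1 + lam 0 + lam 1)) * ((1 + mu * lam 0) / (1 + lam 0)) ∧
    meProb lam 1 mu {0, 1} =
      (1 - mu) * (lam 0 * lam 1 / (1 + lam 0 + lam 1)) *
        (1 / (1 + lam 0) + 1 / (1 + lam 1)) ∧
    meProb lam 1 mu (∅ : Finset (Fin 2)) + meProb lam 1 mu {0} + meProb lam 1 mu {1} +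
      meProb lam 1 mu {0, 1} = 1 := by
  have h0 := hlam 0
  have h1 := hlam 1
  have hs : (1 : ℝ) + lam 0 + lam 1 ≠ 0 := by positivity
  have ha : (1 : ℝ) + lam 0 ≠ 0 := by positivity
  have hb : (1 : ℝ) + lam 1 ≠ 0 := by positivity
  have he : meProb lam 1 mu (∅ : Finset (Fin 2)) = 1 / (1 + lam 0 + lam 1) := by
    simp [meProb, Fin.sum_univ_two]
    ring_nf
  have hb2 : 1 + (lam 0 + lam 1) - lam 0 ≠ 0 := by
    intro h; apply hb; linarith
  have ha2 : 1 + (lam 0 + lam 1) - lam 1 ≠ 0 := by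
    intro h; apply ha; linarith
  have hs2 : 1 + (lam 0 + lam 1) ≠ 0 := by positivity
  have hA : meProb lam 1 mu {0} =
      (lam 0 / (1 + lam 0 + lam 1)) * ((1 + mu * lam 1) / (1 + lam 1)) := by
    simp [meProb, Fin.sum_univ_two]
    rw [div_mul_div_comm, div_mul_div_comm,
      div_eq_div_iff (mul_ne_zero hs2 hb2) (mul_ne_zero hs hb)]
    ring
  have hB : meProb lam 1 mu {1} =
      (lam 1 / (1 + lam 0 + lam 1)) * ((1 + mu * lam 0) / (1 + lam 0)) := by
    simp [meProb, Fin.sum_univ_two]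
    rw [div_mul_div_comm, div_mul_div_comm,
      div_eq_div_iff (mul_ne_zero hs2 ha2) (mul_ne_zero hs ha)]
    ring
  have hsort : ({0,1} : Finset (Fin 2)).sort (· ≤ ·) = [0,1] := by
    rw [Finset.sort_insert, Finset.sort_singleton] <;> decide
  have hperm : (List.permutations [0,1] : List (List (Fin 2))) = [[0,1],[1,0]] := by
    rw [show ([0,1] : List (Fin 2)) = [0] ++ [1] from rfl, List.permutations_append]
    simp [List.permutations]
  have hcompl : (({0,1} : Finset (Fin 2))ᶜ : Finset (Fin 2)) = ∅ := by decide
  have hcard : ({0,1} : Finset (Fin 2)).card = 2 := by decide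
  have hnull : nullProb lam 1 ({0,1} : Finset (Fin 2)) =
      (lam 0 * lam 1 / (1 + lam 0 + lam 1)) * (1 / (1 + lam 0) + 1 / (1 + lam 1)) := by
    rw [nullProb, hsort, hperm, hcompl]
    simp [ordProd]
    field_simp
    ring
  have hC : meProb lam 1 mu {0, 1} =
      (1 - mu) * (lam 0 * lam 1 / (1 + lam 0 + lam 1)) *
        (1 / (1 + lam 0) + 1 / (1 + lam 1)) := by
    rw [meProb, hcard]
    simp [hnull]
    ring
  refine ⟨he, hA, hB, hC, ?_⟩
  rw [he, hA, hB, hC]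
  field_simp
  ring
end
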